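/- Let K ≥ 1, T > 0, δ_1, …, δ_K ≥ 0, and let ξ : [0,T] → ℝ^K be continuous. Then there exists a unique continuous function X : [0,T] → ℝ^K satisfying, for all t ∈ [0,T] and all i, X_i(t) = ξ_i(t) − ∫₀ᵗ δ_i X_i(s) ds − min_{1≤j≤K} ( ξ_j(t) − ∫₀ᵗ δ_j X_j(s) ds ). -/
import Mathlib
open MeasureTheory

section Aux

variable {K : ℕ} {T : ℝ}

noncomputable def projT (hT : 0 < T) : ℝ → Set.Icc (0:ℝ) T := fun t => Set.projIcc 0 T hT.le t

lemma integrand_cont (hT : 0 < T) (δ : Fin K → ℝ) (F : C(Set.Icc (0:ℝ) T, Fin K → ℝ)) (j : Fin K) :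
    Continuous fun s : ℝ => δ j * F (projT hT s) j :=
  continuous_const.mul (((continuous_apply j).comp F.continuous).comp (continuous_projIcc (h := hT.le)))

noncomputable def lamMap (hK : 0 < K) (hT : 0 < T) (δ : Fin K → ℝ) (ξ : ℝ → Fin K → ℝ)
    (hξ : ∀ j, ContinuousOn (fun t => ξ t j) (Set.Icc 0 T)) :
    C(Set.Icc (0:ℝ) T, Fin K → ℝ) → C(Set.Icc (0:ℝ) T, Fin K → ℝ) := fun F =>
  ⟨fun t i => ξ t i - (∫ s in (0 : ℝ)..(t : ℝ), δ i * F (projT hT s) i) -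
      Finset.univ.inf' (Finset.univ_nonempty_iff.mpr (Fin.pos_iff_nonempty.mp hK))
        (fun j => ξ (t : ℝ) j - ∫ s in (0 : ℝ)..(t : ℝ), δ j * F (projT hT s) j), by
    have hprim : ∀ j : Fin K,
        Continuous fun t : Set.Icc (0:ℝ) T => ∫ s in (0 : ℝ)..(t : ℝ), δ j * F (projT hT s) j :=
      fun j => (intervalIntegral.continuous_primitive
        (fun a b => ((integrand_cont hT δ F j).intervalIntegrable a b)) 0).comp
        continuous_subtype_val
    have hxi : ∀ j : Fin K, Continuous fun t : Set.Icc (0:ℝ) T => ξ (t : ℝ) j :=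
      fun j => (hξ j).restrict
    apply continuous_pi
    intro i
    exact ((hxi i).sub (hprim i)).sub
      (Continuous.finset_inf'_apply _ (fun j _ => (hxi j).sub (hprim j)))⟩

lemma lamMap_apply (hK : 0 < K) (hT : 0 < T) (δ : Fin K → ℝ) (ξ : ℝ → Fin K → ℝ)
    (hξ : ∀ j, ContinuousOn (fun t => ξ t j) (Set.Icc 0 T))
    (F : C(Set.Icc (0:ℝ) T, Fin K → ℝ)) (t : Set.Icc (0:ℝ) T) (i : Fin K) :
    lamMap hK hT δ ξ hξ F t i = ξ t i - (∫ s in (0 : ℝ)..(t : ℝ), δ i * F (projT hT s) i) -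
      Finset.univ.inf' (Finset.univ_nonempty_iff.mpr (Fin.pos_iff_nonempty.mp hK))
        (fun j => ξ (t : ℝ) j - ∫ s in (0 : ℝ)..(t : ℝ), δ j * F (projT hT s) j) := rfl

end Aux

section Aux2

variable {K : ℕ} {T : ℝ}

lemma abs_inf'_sub_inf'_le' {ι : Type*} {s : Finset ι} (hs : s.Nonempty)
    (f g : ι → ℝ) {M : ℝ} (h : ∀ j ∈ s, |f j - g j| ≤ M) :
    |s.inf' hs f - s.inf' hs g| ≤ M := by
  rw [abs_sub_le_iff]
  constructor
  · obtain ⟨j, hj, hje⟩ := s.exists_mem_eq_inf' hs g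
    have h1 : s.inf' hs f ≤ f j := Finset.inf'_le _ hj
    have h2 : f j - g j ≤ M := le_trans (le_abs_self _) (h j hj)
    rw [hje]; linarith
  · obtain ⟨j, hj, hje⟩ := s.exists_mem_eq_inf' hs f
    have h1 : s.inf' hs g ≤ g j := Finset.inf'_le _ hj
    have h2 : g j - f j ≤ M := le_trans (le_abs_self _) ((abs_sub_comm (f j) (g j) ▸ h j hj))
    rw [hje]; linarith

lemma key_est (hK : 0 < K) (hT : 0 < T) (δ : Fin K → ℝ) (hδ : ∀ j, 0 ≤ δ j)
    (ξ : ℝ → Fin K → ℝ) (hξ : ∀ j, ContinuousOn (fun t => ξ t j) (Set.Icc 0 T))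
    {C0 : ℝ} (hC0nn : 0 ≤ C0) (hδle : ∀ j, δ j ≤ C0) :
    ∀ n : ℕ, ∀ F G : C(Set.Icc (0:ℝ) T, Fin K → ℝ), ∀ t : Set.Icc (0:ℝ) T,
      dist (((lamMap hK hT δ ξ hξ)^[n]) F t) (((lamMap hK hT δ ξ hξ)^[n]) G t) ≤
        (2 * C0) ^ n * (t : ℝ) ^ n / n.factorial * dist F G := by
  haveI : Nonempty (Fin K) := Fin.pos_iff_nonempty.mp hK
  set C : ℝ := 2 * C0 with hC
  have hCnn : 0 ≤ C := by positivity
  intro n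
  induction n with
  | zero =>
    intro F G t
    simpa using ContinuousMap.dist_apply_le_dist t
  | succ n ih =>
    intro F G t
    rw [Function.iterate_succ_apply', Function.iterate_succ_apply']
    set F' := ((lamMap hK hT δ ξ hξ)^[n]) F with hF'
    set G' := ((lamMap hK hT δ ξ hξ)^[n]) G with hG'
    set d : ℝ := dist F G with hd
    have hdnn : 0 ≤ d := dist_nonneg
    have ht0 : (0 : ℝ) ≤ (t : ℝ) := t.2.1
    have htT : (t : ℝ) ≤ T := t.2.2
    set M : ℝ := C0 * C ^ n * d / n.factorial * ((t : ℝ) ^ (n + 1) / (n + 1)) with hM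
    have hMnn : 0 ≤ M := by positivity
    have hAB : ∀ j : Fin K,
        |(∫ s in (0 : ℝ)..(t : ℝ), δ j * F' (projT hT s) j) -
          ∫ s in (0 : ℝ)..(t : ℝ), δ j * G' (projT hT s) j| ≤ M := by
      intro j
      rw [← intervalIntegral.integral_sub ((integrand_cont hT δ F' j).intervalIntegrable _ _)
        ((integrand_cont hT δ G' j).intervalIntegrable _ _)]
      refine le_trans (intervalIntegral.abs_integral_le_integral_abs ht0) ?_
      have hmono : ∫ s in (0 : ℝ)..(t : ℝ), |δ j * F' (projT hT s) j - δ j * G' (projT hT s) j| ≤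
          ∫ s in (0 : ℝ)..(t : ℝ), (C0 * C ^ n * d / n.factorial) * s ^ n := by
        apply intervalIntegral.integral_mono_on ht0
        · exact ((integrand_cont hT δ F' j).sub
            (integrand_cont hT δ G' j)).abs.intervalIntegrable _ _
        · exact (continuous_const.mul (continuous_pow n)).intervalIntegrable _ _
        · intro s hs
          have hsI : s ∈ Set.Icc (0:ℝ) T := ⟨hs.1, le_trans hs.2 htT⟩
          have hproj : ((projT hT s : Set.Icc (0:ℝ) T) : ℝ) = s := by
            simp only [projT, Set.projIcc_of_mem hT.le hsI]
          have h1 : |F' (projT hT s) j - G' (projT hT s) j| ≤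
              dist (F' (projT hT s)) (G' (projT hT s)) := by
            rw [← Real.dist_eq]; exact dist_le_pi_dist _ _ j
          have h2 : dist (F' (projT hT s)) (G' (projT hT s)) ≤ C ^ n * s ^ n / n.factorial * d := by
            have := ih F G (projT hT s)
            rwa [hproj] at this
          calc |δ j * F' (projT hT s) j - δ j * G' (projT hT s) j|
              = δ j * |F' (projT hT s) j - G' (projT hT s) j| := by
                rw [← mul_sub, abs_mul, abs_of_nonneg (hδ j)]
            _ ≤ C0 * (C ^ n * s ^ n / n.factorial * d) :=
                mul_le_mul (hδle j) (le_trans h1 h2) (abs_nonneg _)  hC0nn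
            _ = (C0 * C ^ n * d / n.factorial) * s ^ n := by ring
      refine le_trans hmono ?_
      rw [intervalIntegral.integral_const_mul, integral_pow]
      rw [hM]
      have h0 : ((0 : ℝ)) ^ (n + 1) = 0 := zero_pow (Nat.succ_ne_zero n)
      rw [h0]
      apply le_of_eq
      ring
    have hcoord : ∀ i : Fin K, dist ((lamMap hK hT δ ξ hξ F') t i)
        ((lamMap hK hT δ ξ hξ G') t i) ≤ M + M := by
      intro i
      rw [Real.dist_eq, lamMap_apply, lamMap_apply]
      have hinf : |Finset.univ.inf' (Finset.univ_nonempty_iff.mpr (Fin.pos_iff_nonempty.mp hK))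
            (fun j => ξ (t : ℝ) j - ∫ s in (0 : ℝ)..(t : ℝ), δ j * F' (projT hT s) j) -
          Finset.univ.inf' (Finset.univ_nonempty_iff.mpr (Fin.pos_iff_nonempty.mp hK))
            (fun j => ξ (t : ℝ) j - ∫ s in (0 : ℝ)..(t : ℝ), δ j * G' (projT hT s) j)| ≤ M := by
        apply abs_inf'_sub_inf'_le'
        intro j _
        have := hAB j
        calc |(ξ (t : ℝ) j - ∫ s in (0 : ℝ)..(t : ℝ), δ j * F' (projT hT s) j) -
            (ξ (t : ℝ) j - ∫ s in (0 : ℝ)..(t : ℝ), δ j * G' (projT hT s) j)| =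
            |(∫ s in (0 : ℝ)..(t : ℝ), δ j * F' (projT hT s) j) -
              ∫ s in (0 : ℝ)..(t : ℝ), δ j * G' (projT hT s) j| := by rw [abs_sub_comm]; ring_nf
          _ ≤ M := hAB j
      have h1 := hAB i
      set AI := ∫ s in (0 : ℝ)..(t : ℝ), δ i * F' (projT hT s) i
      set BI := ∫ s in (0 : ℝ)..(t : ℝ), δ i * G' (projT hT s) i
      set a := Finset.univ.inf' (Finset.univ_nonempty_iff.mpr (Fin.pos_iff_nonempty.mp hK))
            (fun j => ξ (t : ℝ) j - ∫ s in (0 : ℝ)..(t : ℝ), δ j * F' (projT hT s) j)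
      set b := Finset.univ.inf' (Finset.univ_nonempty_iff.mpr (Fin.pos_iff_nonempty.mp hK))
            (fun j => ξ (t : ℝ) j - ∫ s in (0 : ℝ)..(t : ℝ), δ j * G' (projT hT s) j)
      have : ξ (t:ℝ) i - AI - a - (ξ (t:ℝ) i - BI - b) = (BI - AI) + (b - a) := by ring
      rw [this]
      refine le_trans (abs_add_le _ _) (add_le_add ?_ ?_)
      · rwa [abs_sub_comm]
      · rwa [abs_sub_comm]
    have hsum : M + M = C ^ (n+1) * (t : ℝ) ^ (n+1) / (n+1).factorial * d := by
      rw [hM, hC, Nat.factorial_succ]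
      have hfac : ((n.factorial : ℝ)) ≠ 0 := Nat.cast_ne_zero.mpr n.factorial_ne_zero
      have hn1 : ((n : ℝ) + 1) ≠ 0 := by positivity
      push_cast
      field_simp
      ring
    rw [← hsum]
    exact (dist_pi_le_iff (by linarith)).mpr fun i => hcoord i

end Aux2

theorem stmt_6 (K : ℕ) (hK : 0 < K) (T : ℝ) (hT : 0 < T)
    (δ : Fin K → ℝ) (hδ : ∀ j, 0 ≤ δ j)
    (ξ : ℝ → Fin K → ℝ)
    (hξ : ∀ j, ContinuousOn (fun t => ξ t j) (Set.Icc 0 T)) :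
    ∃ X : ℝ → Fin K → ℝ,
      ((∀ i, ContinuousOn (fun t => X t i) (Set.Icc 0 T)) ∧
        ∀ t ∈ Set.Icc (0 : ℝ) T, ∀ i,
          X t i = ξ t i - (∫ s in (0 : ℝ)..t, δ i * X s i) -
            Finset.univ.inf' (Finset.univ_nonempty_iff.mpr (Fin.pos_iff_nonempty.mp hK))
              (fun j => ξ t j - ∫ s in (0 : ℝ)..t, δ j * X s j)) ∧
      ∀ X' : ℝ → Fin K → ℝ,
        ((∀ i, ContinuousOn (fun t => X' t i) (Set.Icc 0 T)) ∧
          ∀ t ∈ Set.Icc (0 : ℝ) T, ∀ i,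
            X' t i = ξ t i - (∫ s in (0 : ℝ)..t, δ i * X' s i) -
              Finset.univ.inf' (Finset.univ_nonempty_iff.mpr (Fin.pos_iff_nonempty.mp hK))
                (fun j => ξ t j - ∫ s in (0 : ℝ)..t, δ j * X' s j)) →
        ∀ t ∈ Set.Icc (0 : ℝ) T, X' t = X t := by
  haveI : Nonempty (Fin K) := Fin.pos_iff_nonempty.mp hK
  set Λ := lamMap hK hT δ ξ hξ with hΛdef
  set C0 : ℝ := Finset.univ.sup' Finset.univ_nonempty δ with hC0
  have hC0nn : 0 ≤ C0 := le_trans (hδ (Classical.arbitrary _))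
    (Finset.le_sup' _ (Finset.mem_univ _))
  have hδle : ∀ j, δ j ≤ C0 := fun j => Finset.le_sup' _ (Finset.mem_univ j)
  -- choose n making the n-th iterate a contraction
  obtain ⟨n, hn⟩ : ∃ n : ℕ, (2 * C0 * T) ^ n / n.factorial < 1 :=
    ((FloorSemiring.tendsto_pow_div_factorial_atTop (2 * C0 * T)).eventually
      (gt_mem_nhds one_pos)).exists
  have hknn : 0 ≤ (2 * C0 * T) ^ n / n.factorial := by positivity
  set k : NNReal := Real.toNNReal ((2 * C0 * T) ^ n / n.factorial) with hk
  have hk1 : k < 1 := by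
    rw [hk]
    exact Real.toNNReal_lt_one.mpr hn
  have hlip : LipschitzWith k (Λ^[n]) := by
    apply LipschitzWith.of_dist_le_mul
    intro F G
    have hkc : (k : ℝ) = (2 * C0 * T) ^ n / n.factorial := Real.coe_toNNReal _ hknn
    rw [hkc]
    refine (ContinuousMap.dist_le (by positivity)).mpr fun t => ?_
    refine le_trans (key_est hK hT δ hδ ξ hξ hC0nn hδle n F G t) ?_
    have h1 : (2 * C0) ^ n * (t : ℝ) ^ n ≤ (2 * C0 * T) ^ n := by
      rw [← mul_pow]
      apply pow_le_pow_left₀ (mul_nonneg (by positivity) t.2.1)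
      nlinarith [t.2.1, t.2.2, hC0nn]
    apply mul_le_mul_of_nonneg_right _ dist_nonneg
    gcongr
  have hcontr : ContractingWith k (Λ^[n]) := ⟨hk1, hlip⟩
  haveI : Nonempty C(Set.Icc (0:ℝ) T, Fin K → ℝ) := ⟨ContinuousMap.const _ 0⟩
  set x : C(Set.Icc (0:ℝ) T, Fin K → ℝ) := ContractingWith.fixedPoint (Λ^[n]) hcontr with hx
  have hxfp : Function.IsFixedPt (Λ^[n]) x := hcontr.fixedPoint_isFixedPt
  have huniq : ∀ y, Λ y = y → y = x := fun y hy =>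
    hcontr.fixedPoint_unique (Function.IsFixedPt.iterate hy n)
  have hΛx : Λ x = x := by
    have h1 : (Λ^[n]) (Λ x) = Λ x := by
      rw [← Function.iterate_succ_apply, Function.iterate_succ_apply', hxfp]
    exact hcontr.fixedPoint_unique h1
  refine ⟨fun t => x (projT hT t), ⟨⟨?_, ?_⟩, ?_⟩⟩
  · intro i
    exact (((continuous_apply i).comp (x.continuous.comp
      (continuous_projIcc (h := hT.le)))).continuousOn)
  · intro t ht i
    have hpt : projT hT t = ⟨t, ht⟩ := by simp [projT, Set.projIcc_of_mem hT.le ht]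
    have h2 : Λ x ⟨t, ht⟩ i = x ⟨t, ht⟩ i := by rw [hΛx]
    rw [hΛdef, lamMap_apply] at h2
    show x (projT hT t) i = _
    rw [hpt]
    exact h2.symm
  · rintro X' ⟨hcont', heq'⟩ t ht
    set y : C(Set.Icc (0:ℝ) T, Fin K → ℝ) :=
      ⟨fun t => X' ↑t, by
        apply continuous_pi
        intro i
        exact (hcont' i).restrict⟩ with hy
    have hyint : ∀ (tt : Set.Icc (0:ℝ) T) (j : Fin K),
        (∫ s in (0:ℝ)..(tt:ℝ), δ j * y (projT hT s) j) =
          ∫ s in (0:ℝ)..(tt:ℝ), δ j * X' s j := by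
      intro tt j
      apply intervalIntegral.integral_congr
      intro s hs
      rw [Set.uIcc_of_le tt.2.1] at hs
      have hsI : s ∈ Set.Icc (0:ℝ) T := ⟨hs.1, hs.2.trans tt.2.2⟩
      simp [projT, Set.projIcc_of_mem hT.le hsI, hy]
    have hyfp : Λ y = y := by
      ext tt i
      rw [hΛdef, lamMap_apply, hyint]
      have hfe : (fun j => ξ (tt:ℝ) j - ∫ s in (0:ℝ)..(tt:ℝ), δ j * y (projT hT s) j) =
          (fun j => ξ (tt:ℝ) j - ∫ s in (0:ℝ)..(tt:ℝ), δ j * X' s j) :=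
        funext fun j => by rw [hyint]
      rw [hfe]
      exact (heq' (tt:ℝ) tt.2 i).symm
    have hyx : y = x := huniq y hyfp
    have hpt : projT hT t = ⟨t, ht⟩ := by simp [projT, Set.projIcc_of_mem hT.le ht]
    show X' t = x (projT hT t)
    rw [hpt, ← hyx]
    rfl
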